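/- arXiv:2312.17361 — 2 statements merged into one kernel-verified Lean document; each statement's English description precedes it below -/
import Mathlib

section
/- For every asymmetric digon, i.e., indices u < v with A_{uv} ≠ 0, A_{vu} ≠ 0, and A_{uv} ≠ A_{vu}, the entry of H^{ϙ} satisfies H^{ϙ}_{uv} = j·(A_{uv}/2) − k·(A_{vu}/2) and H^{ϙ}_{vu} = −H^{ϙ}_{uv}; in particular both the real and first imaginary components of H^{ϙ}_{uv} vanish. -/
open Matrix Quaternion BigOperators

noncomputable section

namespace QL

variable {n : ℕ}

/-- entrywise topology matrix T = sgn(|A|) -/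
def Tm (A : Matrix (Fin n) (Fin n) ℝ) : Matrix (Fin n) (Fin n) ℝ := fun u v => Real.sign |A u v|
/-- N = sgn(|A - Aᵀ|) -/
def Nm (A : Matrix (Fin n) (Fin n) ℝ) : Matrix (Fin n) (Fin n) ℝ := fun u v => Real.sign |A u v - A v u|
/-- O = T ⊙ Tᵀ -/
def Om (A : Matrix (Fin n) (Fin n) ℝ) : Matrix (Fin n) (Fin n) ℝ := fun u v => Tm A u v * Tm A v u
/-- R = sgn(|A| - |Aᵀ|) -/
def Rm (A : Matrix (Fin n) (Fin n) ℝ) : Matrix (Fin n) (Fin n) ℝ := fun u v => Real.sign (|A u v| - |A v u|)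
/-- strict upper-triangular part -/
def Um (M : Matrix (Fin n) (Fin n) ℝ) : Matrix (Fin n) (Fin n) ℝ := fun u v => if u < v then M u v else 0
/-- strict lower-triangular part -/
def Lm (M : Matrix (Fin n) (Fin n) ℝ) : Matrix (Fin n) (Fin n) ℝ := fun u v => if v < u then M u v else 0

def H0 (A : Matrix (Fin n) (Fin n) ℝ) : Matrix (Fin n) (Fin n) ℝ := fun u v => 1 - Nm A u v
def H1 (A : Matrix (Fin n) (Fin n) ℝ) : Matrix (Fin n) (Fin n) ℝ := fun u v => Rm A u v * (1 - Om A u v)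
def H2 (A : Matrix (Fin n) (Fin n) ℝ) : Matrix (Fin n) (Fin n) ℝ :=
  fun u v => Om A u v * Nm A u v * (Um (Tm A) u v - Lm (Tm A)ᵀ u v)
def H3 (A : Matrix (Fin n) (Fin n) ℝ) : Matrix (Fin n) (Fin n) ℝ := fun u v => - H2 A u v

def A1s (A : Matrix (Fin n) (Fin n) ℝ) : Matrix (Fin n) (Fin n) ℝ := fun u v => (A u v + A v u) / 2
def A2s (A : Matrix (Fin n) (Fin n) ℝ) : Matrix (Fin n) (Fin n) ℝ := fun u v => (Um A u v + Lm Aᵀ u v) / 2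
def A3s (A : Matrix (Fin n) (Fin n) ℝ) : Matrix (Fin n) (Fin n) ℝ := fun u v => (Lm A u v + Um Aᵀ u v) / 2

/-- the quaternionic matrix H^ϙ -/
def Hq (A : Matrix (Fin n) (Fin n) ℝ) : Matrix (Fin n) (Fin n) ℍ[ℝ] :=
  fun u v => ⟨A1s A u v * H0 A u v, A1s A u v * H1 A u v, A2s A u v * H2 A u v, A3s A u v * H3 A u v⟩

/-- D̄ₛ = Diag(|A¹ₛ| e) as a quaternion matrix -/
def Dbar (A : Matrix (Fin n) (Fin n) ℝ) : Matrix (Fin n) (Fin n) ℍ[ℝ] :=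
  fun u v => ((if u = v then ∑ w, |A1s A u w| else 0 : ℝ) : ℍ[ℝ])

/-- the Quaternionic Laplacian L^ϙ -/
def Lq (A : Matrix (Fin n) (Fin n) ℝ) : Matrix (Fin n) (Fin n) ℍ[ℝ] := Dbar A - Hq A

/-- quadratic form x* Q x -/
def quadForm (Q : Matrix (Fin n) (Fin n) ℍ[ℝ]) (x : Fin n → ℍ[ℝ]) : ℍ[ℝ] :=
  ∑ u, ∑ v, star (x u) * Q u v * x v

end QL

/-! Every block of `H^ϙ` is built so that `H^ϙ` is Hermitian: the real weight is symmetric and the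
three imaginary weights are antisymmetric. On an asymmetric digon with `u < v` the masks
`H⁰`, `H¹` vanish and `H²` equals `1`, which gives the entry `j (A_{uv}/2) − k (A_{vu}/2)`;
having zero real part, its conjugate `H^ϙ_{vu}` is its negative. -/

namespace QL

variable {n : ℕ}

lemma Um_add_Lm_transpose_comm (M : Matrix (Fin n) (Fin n) ℝ) (u v : Fin n) :
    Um M v u + Lm Mᵀ v u = Um M u v + Lm Mᵀ u v := by
  rcases lt_trichotomy u v with h | h | h <;>
    simp [Um, Lm, h, not_lt_of_gt, add_comm]

lemma Um_sub_Lm_transpose_anticomm (M : Matrix (Fin n) (Fin n) ℝ) (u v : Fin n) :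
    Um M v u - Lm Mᵀ v u = -(Um M u v - Lm Mᵀ u v) := by
  rcases lt_trichotomy u v with h | h | h <;>
    simp [Um, Lm, h, not_lt_of_gt]

lemma A1s_comm (A : Matrix (Fin n) (Fin n) ℝ) (u v : Fin n) : A1s A v u = A1s A u v := by
  simp only [A1s, add_comm]

lemma A2s_comm (A : Matrix (Fin n) (Fin n) ℝ) (u v : Fin n) : A2s A v u = A2s A u v := by
  simp only [A2s, Um_add_Lm_transpose_comm]

lemma A3s_comm (A : Matrix (Fin n) (Fin n) ℝ) (u v : Fin n) : A3s A v u = A3s A u v := by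
  have h := Um_add_Lm_transpose_comm Aᵀ u v
  simp only [transpose_transpose] at h
  simp only [A3s, add_comm (Lm A _ _), h]

lemma Nm_comm (A : Matrix (Fin n) (Fin n) ℝ) (u v : Fin n) : Nm A v u = Nm A u v := by
  simp only [Nm, abs_sub_comm]

lemma Om_comm (A : Matrix (Fin n) (Fin n) ℝ) (u v : Fin n) : Om A v u = Om A u v := by
  simp only [Om, mul_comm]

lemma H0_comm (A : Matrix (Fin n) (Fin n) ℝ) (u v : Fin n) : H0 A v u = H0 A u v := by
  simp only [H0, Nm_comm]

lemma H1_anticomm (A : Matrix (Fin n) (Fin n) ℝ) (u v : Fin n) : H1 A v u = -H1 A u v := by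
  simp only [H1, Rm, Om_comm A u v, ← neg_sub (|A u v|), Real.sign_neg, neg_mul]

lemma H2_anticomm (A : Matrix (Fin n) (Fin n) ℝ) (u v : Fin n) : H2 A v u = -H2 A u v := by
  simp only [H2, Om_comm A u v, Nm_comm A u v]
  rw [Um_sub_Lm_transpose_anticomm (Tm A) u v, mul_neg]

lemma H3_anticomm (A : Matrix (Fin n) (Fin n) ℝ) (u v : Fin n) : H3 A v u = -H3 A u v := by
  simp only [H3]
  rw [H2_anticomm]

theorem Hq_isHermitian (A : Matrix (Fin n) (Fin n) ℝ) : (Hq A).IsHermitian := by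
  refine IsHermitian.ext fun u v => ?_
  ext <;>
    simp only [Quaternion.re_star, Quaternion.imI_star, Quaternion.imJ_star,
      Quaternion.imK_star] <;>
    simp only [Hq, A1s_comm A u v, A2s_comm A u v, A3s_comm A u v, H0_comm A u v,
      H1_anticomm A u v, H2_anticomm A u v, H3_anticomm A u v, mul_neg, neg_neg]

section Digon

variable {A : Matrix (Fin n) (Fin n) ℝ} {u v : Fin n}

lemma Tm_apply_eq_one (h : A u v ≠ 0) : Tm A u v = 1 :=
  Real.sign_of_pos (abs_pos.mpr h)

lemma Nm_apply_eq_one (hne : A u v ≠ A v u) : Nm A u v = 1 :=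
  Real.sign_of_pos (abs_pos.mpr (sub_ne_zero.mpr hne))

lemma Om_apply_eq_one (h1 : A u v ≠ 0) (h2 : A v u ≠ 0) : Om A u v = 1 := by
  rw [Om, Tm_apply_eq_one h1, Tm_apply_eq_one h2, mul_one]

lemma H0_apply_eq_zero (hne : A u v ≠ A v u) : H0 A u v = 0 := by
  rw [H0, Nm_apply_eq_one hne, sub_self]

lemma H1_apply_eq_zero (h1 : A u v ≠ 0) (h2 : A v u ≠ 0) : H1 A u v = 0 := by
  rw [H1, Om_apply_eq_one h1 h2, sub_self, mul_zero]

lemma H2_apply_of_lt (huv : u < v) (h1 : A u v ≠ 0) (h2 : A v u ≠ 0) (hne : A u v ≠ A v u) :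
    H2 A u v = 1 := by
  simp [H2, Um, Lm, huv, not_lt_of_gt huv, Om_apply_eq_one h1 h2, Nm_apply_eq_one hne,
    Tm_apply_eq_one h1]

lemma A2s_apply_of_lt (huv : u < v) : A2s A u v = A u v / 2 := by
  simp [A2s, Um, Lm, huv, not_lt_of_gt huv]

lemma A3s_apply_of_lt (huv : u < v) : A3s A u v = A v u / 2 := by
  simp [A3s, Um, Lm, huv, not_lt_of_gt huv]

lemma Hq_apply_of_digon (huv : u < v) (h1 : A u v ≠ 0) (h2 : A v u ≠ 0) (hne : A u v ≠ A v u) :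
    Hq A u v = ⟨0, 0, A u v / 2, -(A v u / 2)⟩ := by
  ext <;> simp [Hq, H3, H0_apply_eq_zero hne, H1_apply_eq_zero h1 h2,
    H2_apply_of_lt huv h1 h2 hne, A2s_apply_of_lt huv, A3s_apply_of_lt huv]

end Digon

end QL

theorem stmt_12 {n : ℕ} (A : Matrix (Fin n) (Fin n) ℝ) (u v : Fin n)
    (huv : u < v) (h1 : A u v ≠ 0) (h2 : A v u ≠ 0) (hne : A u v ≠ A v u) :
    QL.Hq A u v = (⟨0, 0, A u v / 2, -(A v u / 2)⟩ : ℍ[ℝ]) ∧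
    QL.Hq A v u = -(QL.Hq A u v) := by
  have hdigon := QL.Hq_apply_of_digon huv h1 h2 hne
  refine ⟨hdigon, ?_⟩
  rw [← (QL.Hq_isHermitian A).apply, Quaternion.star_eq_neg, hdigon]
end
end

section
/- For any unweighted digraph with adjacency matrix A ∈ {0,1}^{n×n} whose digons are all symmetric (A_{uv} = 1 and A_{vu} = 1 may both hold, but then they have equal weight 1 automatically), the Quaternionic Laplacian L^{ϙ} equals the Magnetic Laplacian L^{(q)} with q = 1/4, viewed as a quaternion matrix with zero j and k components: Re(L^{ϙ}) = Re(L^{(1/4)}) and Im₁(L^{ϙ}) = Im(L^{(1/4)}). -/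
open Matrix Quaternion BigOperators

noncomputable section

/-!
For a 0/1 matrix the quarter-phase `π/2 · (A u v - A v u)` lies in `{-π/2, 0, π/2}`, so its cosine
is `1 - |A u v - A v u|` and its sine is `A u v - A v u`. A case split on the pair
`(A u v, A v u)` shows that the sign patterns defining `H^ϙ` produce exactly these two values, while
the `j`- and `k`-parts vanish because every digon of such a matrix has equal weights. Since
`A¹ₛ ≥ 0`, the degree matrix `D̄ₛ` is the magnetic one as well.
-/

namespace QL

variable {n : ℕ}

/-- The magnetic phase matrix `Θ^{(q)} = 2πq(A − Aᵀ)`. -/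
def magneticPhase (q : ℝ) (A : Matrix (Fin n) (Fin n) ℝ) : Matrix (Fin n) (Fin n) ℝ :=
  fun u v => 2 * Real.pi * q * (A u v - A v u)

lemma magneticPhase_quarter (A : Matrix (Fin n) (Fin n) ℝ) (u v : Fin n) :
    magneticPhase (1 / 4) A u v = Real.pi / 2 * (A u v - A v u) := by
  simp only [magneticPhase]; ring

lemma A1s_nonneg {A : Matrix (Fin n) (Fin n) ℝ} (hA : ∀ u v, 0 ≤ A u v) (u v : Fin n) :
    0 ≤ A1s A u v :=
  div_nonneg (add_nonneg (hA u v) (hA v u)) zero_le_two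

lemma Dbar_apply_of_nonneg {A : Matrix (Fin n) (Fin n) ℝ} (hA : ∀ u v, 0 ≤ A u v) (u v : Fin n) :
    Dbar A u v = ((if u = v then ∑ w, A1s A u w else 0 : ℝ) : ℍ[ℝ]) := by
  simp only [Dbar, abs_of_nonneg (A1s_nonneg hA _ _)]

section Binary

variable {A : Matrix (Fin n) (Fin n) ℝ} (h01 : ∀ u v, A u v = 0 ∨ A u v = 1)
include h01

lemma H0_eq_cos_magneticPhase (u v : Fin n) :
    H0 A u v = Real.cos (magneticPhase (1 / 4) A u v) := by
  rw [magneticPhase_quarter]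
  rcases h01 u v with h | h <;> rcases h01 v u with h' | h' <;>
    simp [H0, Nm, h, h', Real.sign_of_pos]

lemma H1_eq_sin_magneticPhase (u v : Fin n) :
    H1 A u v = Real.sin (magneticPhase (1 / 4) A u v) := by
  rw [magneticPhase_quarter]
  rcases h01 u v with h | h <;> rcases h01 v u with h' | h' <;>
    simp [H1, Rm, Om, Tm, h, h', Real.sign_of_pos, Real.sign_of_neg]

-- `Om A u v = 1` forces `A u v = A v u`, i.e. `Nm A u v = 0`.
lemma H2_eq_zero (u v : Fin n) : H2 A u v = 0 := by
  rcases h01 u v with h | h <;> rcases h01 v u with h' | h' <;>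
    simp [H2, Om, Nm, Tm, h, h']

lemma re_Hq (u v : Fin n) :
    (Hq A u v).re = A1s A u v * Real.cos (magneticPhase (1 / 4) A u v) := by
  rw [← H0_eq_cos_magneticPhase h01]; rfl

lemma imI_Hq (u v : Fin n) :
    (Hq A u v).imI = A1s A u v * Real.sin (magneticPhase (1 / 4) A u v) := by
  rw [← H1_eq_sin_magneticPhase h01]; rfl

lemma imJ_Hq (u v : Fin n) : (Hq A u v).imJ = 0 := by
  simp [Hq, H2_eq_zero h01]

lemma imK_Hq (u v : Fin n) : (Hq A u v).imK = 0 := by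
  simp [Hq, H3, H2_eq_zero h01]

end Binary

end QL

theorem stmt_19 {n : ℕ} (A : Matrix (Fin n) (Fin n) ℝ)
    (h01 : ∀ u v, A u v = 0 ∨ A u v = 1) :
    ∀ u v,
      (QL.Lq A u v).re =
        (if u = v then ∑ w, QL.A1s A u w else 0) -
          QL.A1s A u v * Real.cos (2 * Real.pi * (1 / 4) * (A u v - A v u)) ∧
      (QL.Lq A u v).imI =
        -(QL.A1s A u v * Real.sin (2 * Real.pi * (1 / 4) * (A u v - A v u))) ∧
      (QL.Lq A u v).imJ = 0 ∧ (QL.Lq A u v).imK = 0 := by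
  intro u v
  have hA : ∀ u v, 0 ≤ A u v := fun u v => by rcases h01 u v with h | h <;> simp [h]
  simp only [QL.Lq, Matrix.sub_apply, QL.Dbar_apply_of_nonneg hA, Quaternion.re_sub,
    Quaternion.imI_sub, Quaternion.imJ_sub, Quaternion.imK_sub, Quaternion.re_coe,
    Quaternion.imI_coe, Quaternion.imJ_coe, Quaternion.imK_coe, QL.re_Hq h01, QL.imI_Hq h01,
    QL.imJ_Hq h01, QL.imK_Hq h01]
  exact ⟨rfl, zero_sub _, sub_self 0, sub_self 0⟩
end
end
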